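/- arXiv:2001.04436 — 5 statements merged into one kernel-verified Lean document; each statement's English description precedes it below -/
import Mathlib

section
/- Let F ⊆ K be fields, let r < k be positive integers, and let α_1, …, α_{k−2} ∈ K satisfy α_i ∉ F(α_1, …, α_{i−1}) for every i. Let A = (a_{ij}) ∈ K^{(k−r)×r} be a matrix such that a_{11} = 1 and, for all (i,j) ≠ (1,1) with 1 ≤ i ≤ k−r and 1 ≤ j ≤ r, a_{ij} ∈ F(α_1, …, α_{i+j−2}) \ F(α_1, …, α_{i+j−3}). Then any r row vectors of the k×r matrix Ā obtained by stacking A on top of the r×r identity matrix I_r are linearly independent over K. -/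
/-!
Among the chosen rows of `Ā`, those coming from `I_r` are distinct unit vectors, so a linear
relation must vanish on them once it vanishes on the rows coming from `A`; restricted to the
remaining columns, the latter form a square submatrix of `A`. Every such submatrix is
nonsingular: with `L m = F(α_1, …, α_m)`, the entry `a_ij` lies in `L (i + j)` but not in
`L (i + j - 1)`. Expanding the determinant along the last row, the corner entry is new at the
level `N` of the corner, while the other terms and the complementary minor lie in `L (N - 1)`, and
that minor is nonzero by induction.
-/

/-- The `k × r` matrix `Ā = [A; I_r]` obtained by stacking `A ∈ K^{(k-r)×r}` on top of the
`r × r` identity matrix. -/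
def stackId {K : Type*} [Zero K] [One K] (k r : ℕ) (A : Matrix (Fin (k - r)) (Fin r) K) :
    Matrix (Fin k) (Fin r) K :=
  Matrix.of fun i j =>
    if h : (i : ℕ) < k - r then A ⟨i, h⟩ j
    else if (i : ℕ) = k - r + (j : ℕ) then 1 else 0

open Finset

theorem Matrix.det_mem_of_forall_mem {R S : Type*} [CommRing R] [SetLike S R]
    [SubringClass S R] {n : Type*} [Fintype n] [DecidableEq n] (s : S) {M : Matrix n n R}
    (h : ∀ i j, M i j ∈ s) : M.det ∈ s := by
  have hM : M = (SubringClass.subtype s).mapMatrix (Matrix.of fun i j => ⟨M i j, h i j⟩) := rfl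
  rw [hM, ← RingHom.map_det]
  exact SetLike.coe_mem _

theorem Subfield.add_mul_ne_zero_of_notMem {K : Type*} [Field K] {S : Subfield K} {x y z : K}
    (hx : x ∉ S) (hy : y ∈ S) (hy0 : y ≠ 0) (hz : z ∈ S) : z + x * y ≠ 0 := by
  intro h
  have hx' : x = -z / y := by field_simp; linear_combination h
  exact hx (hx' ▸ S.div_mem (S.neg_mem hz) hy)

theorem linearIndependent_of_eq_single {K ι n : Type*} [Field K] [Fintype ι] [DecidableEq n]
    {v : ι → n → K} {p : ι → Prop} {g : ι → n} (hg : ∀ i i', p i → p i' → g i = g i' → i = i')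
    (hv : ∀ i, p i → v i = Pi.single (g i) 1) {C : Finset n} (hC : ∀ i, p i → g i ∉ C)
    (hrest : LinearIndependent K fun (i : {i // ¬ p i}) (j : C) => v i j) :
    LinearIndependent K v := by
  classical
  rw [Fintype.linearIndependent_iff]
  intro c hc
  have hcj : ∀ j, ∑ i, c i * v i j = 0 := fun j => by simpa using congrFun hc j
  have hcnp : ∀ i, ¬ p i → c i = 0 := by
    refine fun i hi => Fintype.linearIndependent_iff.1 hrest (fun i => c i) ?_ ⟨i, hi⟩
    ext j
    have hp : ∑ i : {i // p i}, c i * v i j = 0 := Fintype.sum_eq_zero _ fun i => by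
      rw [hv i i.2, Pi.single_apply, if_neg (ne_of_mem_of_not_mem j.2 (hC i i.2)), mul_zero]
    simpa [hp] using (Fintype.sum_subtype_add_sum_subtype p fun i => c i * v i j).trans (hcj j)
  intro i
  by_cases hi : p i
  · have := hcj (g i)
    rwa [Fintype.sum_eq_single i, hv i hi, Pi.single_eq_same, mul_one] at this
    intro i' hi'
    by_cases hpi' : p i'
    · rw [hv i' hpi', Pi.single_apply, if_neg fun h => hi' (hg i' i hpi' hi h.symm),
        mul_zero]
    · rw [hcnp i' hpi', zero_mul]
  · exact hcnp i hi

section stackId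

variable {K : Type*} [Zero K] [One K] {k r : ℕ} (A : Matrix (Fin (k - r)) (Fin r) K) {i : Fin k}

theorem stackId_apply_of_lt (h : (i : ℕ) < k - r) : stackId k r A i = A ⟨i, h⟩ := by
  ext j; simp [stackId, h]

theorem stackId_apply_of_le (h : k - r ≤ i) :
    stackId k r A i = Pi.single ⟨(i : ℕ) - (k - r), by omega⟩ 1 := by
  ext j
  simp only [stackId, Matrix.of_apply, dif_neg (not_lt.2 h), Pi.single_apply, Fin.ext_iff]
  congr 1
  grind

end stackId

/-- `x` first appears at stage `n` of the tower `L`, the stage below `L 0` being `{0}`. -/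
structure EntersAt {K : Type*} [Field K] (L : ℕ → Subfield K) (n : ℕ) (x : K) : Prop where
  mem : x ∈ L n
  ne_zero : x ≠ 0
  notMem_of_lt : ∀ l < n, x ∉ L l

section Tower

variable {K : Type*} [Field K] {L : ℕ → Subfield K}

theorem EntersAt.of_mem_of_notMem (hL : Monotone L) {n : ℕ} {x : K} (hn : 0 < n) (hx : x ∈ L n)
    (hx' : x ∉ L (n - 1)) : EntersAt L n x where
  mem := hx
  ne_zero h := hx' (h ▸ zero_mem _)
  notMem_of_lt l hl h := hx' (hL (by omega) h)

theorem det_ne_zero_of_entersAt (hL : Monotone L) :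
    ∀ {s : ℕ} {ρ γ : Fin s → ℕ}, StrictMono ρ → StrictMono γ →
    ∀ {B : Matrix (Fin s) (Fin s) K}, (∀ t u, B t u ∈ L (ρ t + γ u)) →
      (∀ t, EntersAt L (ρ t + γ t) (B t t)) → B.det ≠ 0
  | 0, _, _, _, _, _, _, _ => by simp
  | 1, _, _, _, _, B, _, hdiag => by simpa [Matrix.det_fin_one] using (hdiag 0).ne_zero
  | s + 2, ρ, γ, hρ, hγ, B, hmem, hdiag => by
    set l := Fin.last (s + 1)
    have hρl : ∀ t : Fin (s + 1), ρ t.castSucc < ρ l := fun t => hρ (Fin.castSucc_lt_last t)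
    have hγl : ∀ u : Fin (s + 1), γ u.castSucc < γ l := fun u => hγ (Fin.castSucc_lt_last u)
    have hγle : ∀ u, γ u ≤ γ l := fun u => hγ.monotone (Fin.le_last u)
    have hminor : ∀ j : Fin (s + 2),
        (B.submatrix l.succAbove j.succAbove).det ∈ L (ρ l + γ l - 1) := fun j =>
      Matrix.det_mem_of_forall_mem _ fun t u => by
        rw [Matrix.submatrix_apply, Fin.succAbove_last]
        exact hL (by have := hρl t; have := hγle (j.succAbove u); omega) (hmem _ _)
    have hD : (B.submatrix l.succAbove l.succAbove).det ≠ 0 := by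
      simp only [l, Fin.succAbove_last]
      exact det_ne_zero_of_entersAt hL (hρ.comp Fin.strictMono_castSucc)
        (hγ.comp Fin.strictMono_castSucc) (fun t u => hmem _ _) (fun t => hdiag _)
    rw [Matrix.det_succ_row B l, Fin.sum_univ_castSucc, Even.neg_one_pow ⟨_, rfl⟩, one_mul]
    refine Subfield.add_mul_ne_zero_of_notMem ((hdiag l).notMem_of_lt _ ?_) (hminor l) hD
      (sum_mem fun j _ => mul_mem (mul_mem ?_ ?_) (hminor _))
    · have := hρl 0; omega
    · exact pow_mem (neg_mem (one_mem _)) _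
    · exact hL (by have := hρl 0; have := hγl j; omega) (hmem _ _)

theorem linearIndependent_restrict_rows_of_entersAt (hL : Monotone L) {m p : ℕ}
    {A : Matrix (Fin m) (Fin p) K} (hA : ∀ (i : Fin m) (j : Fin p), EntersAt L (i + j : ℕ) (A i j))
    {ι : Type*} [Fintype ι] {e : ι → Fin m} (he : Function.Injective e) {C : Finset (Fin p)}
    (hC : #C = Fintype.card ι) :
    LinearIndependent K fun i (j : C) => A (e i) j := by
  classical
  have hR : #(univ.image e) = Fintype.card ι := card_image_of_injective _ he
  set eR := (univ.image e).orderIsoOfFin hR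
  set eC := C.orderIsoOfFin hC
  have hB : LinearIndependent K fun t u => A (eR t) (eC u) :=
    Matrix.linearIndependent_rows_of_det_ne_zero (A := A.submatrix (fun t => eR t) fun u => eC u)
      (det_ne_zero_of_entersAt hL (ρ := fun t => (eR t : ℕ)) (γ := fun u => (eC u : ℕ))
        (fun _ _ h => eR.strictMono h) (fun _ _ h => eC.strictMono h)
        (fun _ _ => (hA _ _).mem) fun _ => hA _ _)
  have := (hB.map' (LinearEquiv.funCongrLeft K K eC.symm.toEquiv).toLinearMap
    (LinearEquiv.ker _)).comp (fun i => eR.symm ⟨e i, mem_image_of_mem e (mem_univ i)⟩)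
    (fun i i' h => he (by simpa using h))
  simpa [Function.comp_def, LinearMap.funLeft] using this

theorem linearIndependent_stackId_comp (hL : Monotone L) {k r : ℕ}
    {A : Matrix (Fin (k - r)) (Fin r) K}
    (hA : ∀ (i : Fin (k - r)) (j : Fin r), EntersAt L (i + j : ℕ) (A i j))
    {f : Fin r → Fin k} (hf : Function.Injective f) :
    LinearIndependent K fun i => stackId k r A (f i) := by
  classical
  set p : Fin r → Prop := fun i => k - r ≤ (f i : ℕ)
  set g : Fin r → Fin r := fun i =>
    ⟨(f i : ℕ) - (k - r), by have := (f i).2; have := i.2; omega⟩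
  set C : Finset (Fin r) := ((univ.filter p).image g)ᶜ
  have hg : ∀ i i', p i → p i' → g i = g i' → i = i' := fun i i' hi hi' h =>
    hf (Fin.ext (by simp only [g, p, Fin.ext_iff] at h hi hi'; omega))
  have hC : #C = Fintype.card {i // ¬ p i} := by
    rw [card_compl, card_image_of_injOn fun i hi i' hi' => hg i i' (by simpa using hi)
      (by simpa using hi'), Fintype.card_subtype, filter_not, card_sdiff_of_subset
      (subset_univ _), Fintype.card_fin, card_univ, Fintype.card_fin]
  refine linearIndependent_of_eq_single hg (fun i hi => stackId_apply_of_le A hi) (C := C)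
    (fun i hi => by simpa [C] using ⟨i, hi, rfl⟩) ?_
  have := linearIndependent_restrict_rows_of_entersAt hL hA
    (e := fun i : {i // ¬ p i} => ⟨f i, not_le.1 i.2⟩)
    (fun i i' h => Subtype.ext (hf (Fin.ext (by simpa using h)))) hC
  have hrow (i : {i // ¬ p i}) : stackId k r A (f i) = A ⟨f i, not_le.1 i.2⟩ :=
    stackId_apply_of_lt A _
  simpa only [hrow] using this

end Tower

theorem stmt_1_general {F K : Type*} [Field F] [Field K] [Algebra F K]
    (k r : ℕ)
    (α : ℕ → K)
    (A : Matrix (Fin (k - r)) (Fin r) K)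
    (hA11 : ∀ (i : Fin (k - r)) (j : Fin r), ((i : ℕ), (j : ℕ)) = (0, 0) → A i j = 1)
    (hA : ∀ (i : Fin (k - r)) (j : Fin r), ((i : ℕ), (j : ℕ)) ≠ (0, 0) →
      A i j ∈ (IntermediateField.adjoin F (α '' Set.Icc 1 ((i : ℕ) + (j : ℕ))) : Set K) \
        (IntermediateField.adjoin F (α '' Set.Icc 1 ((i : ℕ) + (j : ℕ) - 1)) : Set K)) :
    ∀ f : Fin r → Fin k, Function.Injective f →
      LinearIndependent K fun i : Fin r => stackId k r A (f i) := by
  set L : ℕ → Subfield K := fun m => (IntermediateField.adjoin F (α '' Set.Icc 1 m)).toSubfield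
  have hL : Monotone L := fun m m' h =>
    IntermediateField.adjoin.mono F _ _ (Set.image_mono (Set.Icc_subset_Icc_right h))
  refine fun f hf => linearIndependent_stackId_comp hL (fun i j => ?_) hf
  by_cases h : ((i : ℕ), (j : ℕ)) = (0, 0)
  · rw [hA11 i j h]
    simp only [Prod.mk.injEq] at h
    rw [h.1, h.2]
    exact ⟨one_mem _, one_ne_zero, fun l hl => absurd hl l.not_lt_zero⟩
  · exact .of_mem_of_notMem hL (by grind) (hA i j h).1 (hA i j h).2

/-- Let `F ⊆ K` be fields, `0 < r < k`, and `α_1, …, α_{k-2} ∈ K` with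
`α_i ∉ F(α_1,…,α_{i-1})` for every `i`.  If `A ∈ K^{(k-r)×r}` has `a_{11} = 1` and
`a_{ij} ∈ F(α_1,…,α_{i+j-2}) \ F(α_1,…,α_{i+j-3})` for `(i,j) ≠ (1,1)` (1-based indices;
here `i j : Fin _` are 0-based, so `i+j-2` becomes `i.val + j.val`), then any `r` rows of
`Ā = [A; I_r]` are linearly independent over `K`. -/
theorem stmt_1 {F K : Type*} [Field F] [Field K] [Algebra F K]
    (k r : ℕ) (hr : 0 < r) (hrk : r < k)
    (α : ℕ → K)
    (hα : ∀ i, 1 ≤ i → i ≤ k - 2 →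
      α i ∉ IntermediateField.adjoin F (α '' Set.Icc 1 (i - 1)))
    (A : Matrix (Fin (k - r)) (Fin r) K)
    (hA11 : ∀ (i : Fin (k - r)) (j : Fin r), ((i : ℕ), (j : ℕ)) = (0, 0) → A i j = 1)
    (hA : ∀ (i : Fin (k - r)) (j : Fin r), ((i : ℕ), (j : ℕ)) ≠ (0, 0) →
      A i j ∈ (IntermediateField.adjoin F (α '' Set.Icc 1 ((i : ℕ) + (j : ℕ))) : Set K) \
        (IntermediateField.adjoin F (α '' Set.Icc 1 ((i : ℕ) + (j : ℕ) - 1)) : Set K)) :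
    ∀ f : Fin r → Fin k, Function.Injective f →
      LinearIndependent K fun i : Fin r => stackId k r A (f i) :=
  stmt_1_general k r α A hA11 hA
end

section
/- Let F ⊆ K be fields, let r be a positive integer, and let α_1, …, α_{2r−2} ∈ K satisfy α_i ∉ F(α_1, …, α_{i−1}) for every i. Let A = (a_{ij}) ∈ K^{r×r} be a matrix such that a_{11} = 1 and, for all (i,j) ≠ (1,1) with 1 ≤ i, j ≤ r, a_{ij} ∈ F(α_1, …, α_{i+j−2}) \ F(α_1, …, α_{i+j−3}). Then A is invertible. -/
/-!
Expand the determinant along the last row. Every entry except the corner `a_{rr}` lies in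
`E = F(α_1, …, α_{2r-3})` and the corner does not, so `det A = a_{rr} · det M + D`
with `D, det M ∈ E`, where `M` is the leading `(r-1) × (r-1)` block. By induction `det M ≠ 0`,
and `det A = 0` would force `a_{rr} = -D / det M ∈ E`.
-/

open Finset

theorem Matrix.det_mem {R S ι : Type*} [CommRing R] [Fintype ι] [DecidableEq ι]
    [SetLike S R] [SubringClass S R] (E : S) (M : Matrix ι ι R) (h : ∀ i j, M i j ∈ E) :
    M.det ∈ E := by
  rw [Matrix.det_apply]
  refine sum_mem fun σ _ => ?_
  rw [Units.smul_def]
  exact zsmul_mem (prod_mem fun i _ => h _ _) _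

section

variable {K S : Type*} [Field K] [SetLike S K] [SubfieldClass S K]

theorem Matrix.det_ne_zero_of_corner_notMem {n : ℕ} (E : S)
    (A : Matrix (Fin (n + 1)) (Fin (n + 1)) K)
    (hminor : (A.submatrix Fin.castSucc Fin.castSucc).det ≠ 0)
    (hmem : ∀ i j, (i, j) ≠ (Fin.last n, Fin.last n) → A i j ∈ E)
    (hcorner : A (Fin.last n) (Fin.last n) ∉ E) :
    A.det ≠ 0 := by
  set M := A.submatrix Fin.castSucc Fin.castSucc
  set D := ∑ j ∈ univ.erase (Fin.last n),
    (-1) ^ (n + (j : ℕ)) * A (Fin.last n) j * (A.submatrix (Fin.last n).succAbove j.succAbove).det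
  have hD : D ∈ E := by
    refine sum_mem fun j hj => mul_mem (mul_mem (pow_mem (neg_mem (one_mem E)) _) ?_) ?_
    · exact hmem _ _ fun h => ne_of_mem_erase hj (Prod.ext_iff.1 h).2
    · refine Matrix.det_mem E _ fun i' j' => hmem _ _ fun h => ?_
      exact Fin.succAbove_ne _ _ (Prod.ext_iff.1 h).1
  have hM : M.det ∈ E := Matrix.det_mem E M fun i j => hmem _ _ (by simp)
  have hexpand : A.det = A (Fin.last n) (Fin.last n) * M.det + D := by
    rw [Matrix.det_succ_row A (Fin.last n), ← add_sum_erase _ _ (mem_univ _)]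
    congr 1
    rw [Fin.succAbove_last, Fin.val_last, ← two_mul, pow_mul, neg_one_sq, one_pow, one_mul]
  intro hdet
  have hcorner_eq : A (Fin.last n) (Fin.last n) = -D / M.det := by
    rw [eq_div_iff hminor]
    linear_combination hexpand.symm.trans hdet
  exact hcorner (hcorner_eq ▸ div_mem (neg_mem hD) hM)

theorem Matrix.det_ne_zero_of_mem_of_diag_notMem [Preorder S] [IsConcreteLE S K] (E : ℕ → S)
    (hE : Monotone E) {n : ℕ} (A : Matrix (Fin (n + 1)) (Fin (n + 1)) K) (h00 : A 0 0 ≠ 0)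
    (hmem : ∀ i j : Fin (n + 1), A i j ∈ E (i + j))
    (hdiag : ∀ i : Fin (n + 1), 0 < (i : ℕ) → A i i ∉ E (2 * i - 1)) :
    A.det ≠ 0 := by
  induction n with
  | zero => simpa [Matrix.det_fin_one] using h00
  | succ n ih =>
    refine Matrix.det_ne_zero_of_corner_notMem (E (2 * n + 1)) A ?_ (fun i j hij => ?_) ?_
    · exact ih (A.submatrix Fin.castSucc Fin.castSucc) h00 (fun i j => hmem i.castSucc j.castSucc)
        fun i hi => hdiag i.castSucc hi
    · have hne : ¬((i : ℕ) = n + 1 ∧ (j : ℕ) = n + 1) := fun ⟨hi, hj⟩ =>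
        hij (Prod.ext (Fin.ext hi) (Fin.ext hj))
      refine SetLike.coe_subset_coe.2 (hE ?_) (hmem i j)
      omega
    · have hlast := hdiag (Fin.last _) (by simp)
      rwa [Fin.val_last, show 2 * (n + 1) - 1 = 2 * n + 1 by omega] at hlast

end

theorem stmt_2_general {F K : Type*} [Field F] [Field K] [Algebra F K]
    (r : ℕ)
    (α : ℕ → K)
    (A : Matrix (Fin r) (Fin r) K)
    (hA11 : ∀ i j : Fin r, ((i : ℕ), (j : ℕ)) = (0, 0) → A i j = 1)
    (hA : ∀ i j : Fin r, ((i : ℕ), (j : ℕ)) ≠ (0, 0) →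
      A i j ∈ (IntermediateField.adjoin F (α '' Set.Icc 1 ((i : ℕ) + (j : ℕ))) : Set K) \
        (IntermediateField.adjoin F (α '' Set.Icc 1 ((i : ℕ) + (j : ℕ) - 1)) : Set K)) :
    IsUnit A := by
  rcases r with _ | n
  · exact isUnit_of_subsingleton A
  set E : ℕ → IntermediateField F K := fun k => IntermediateField.adjoin F (α '' Set.Icc 1 k)
  have hE : Monotone E := fun _ _ h =>
    IntermediateField.adjoin.mono _ _ _ (Set.image_mono (Set.Icc_subset_Icc_right h))
  have h00 : A 0 0 = 1 := hA11 0 0 rfl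
  rw [Matrix.isUnit_iff_isUnit_det, isUnit_iff_ne_zero]
  refine Matrix.det_ne_zero_of_mem_of_diag_notMem E hE A (h00 ▸ one_ne_zero)
    (fun i j => ?_) (fun i hi => ?_)
  · by_cases hij : ((i : ℕ), (j : ℕ)) = (0, 0)
    · obtain ⟨hi, hj⟩ := Prod.mk.inj hij
      obtain rfl : i = 0 := Fin.ext hi
      obtain rfl : j = 0 := Fin.ext hj
      exact h00 ▸ one_mem _
    · exact (hA i j hij).1
  · have hnotMem := (hA i i (by simp only [ne_eq, Prod.mk.injEq]; omega)).2
    rwa [← two_mul] at hnotMem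

/-- Let `F ⊆ K` be fields, `r ≥ 1`, and `α_1, …, α_{2r-2} ∈ K` with
`α_i ∉ F(α_1,…,α_{i-1})` for every `i`.  If `A ∈ K^{r×r}` has `a_{11} = 1` and
`a_{ij} ∈ F(α_1,…,α_{i+j-2}) \ F(α_1,…,α_{i+j-3})` for `(i,j) ≠ (1,1)` (1-based indices;
here `i j : Fin r` are 0-based, so `i+j-2` becomes `i.val + j.val`), then `A` is
invertible. -/
theorem stmt_2 {F K : Type*} [Field F] [Field K] [Algebra F K]
    (r : ℕ) (hr : 0 < r)
    (α : ℕ → K)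
    (hα : ∀ i, 1 ≤ i → i ≤ 2 * r - 2 →
      α i ∉ IntermediateField.adjoin F (α '' Set.Icc 1 (i - 1)))
    (A : Matrix (Fin r) (Fin r) K)
    (hA11 : ∀ i j : Fin r, ((i : ℕ), (j : ℕ)) = (0, 0) → A i j = 1)
    (hA : ∀ i j : Fin r, ((i : ℕ), (j : ℕ)) ≠ (0, 0) →
      A i j ∈ (IntermediateField.adjoin F (α '' Set.Icc 1 ((i : ℕ) + (j : ℕ))) : Set K) \
        (IntermediateField.adjoin F (α '' Set.Icc 1 ((i : ℕ) + (j : ℕ) - 1)) : Set K)) :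
    IsUnit A :=
  stmt_2_general r α A hA11 hA
end

section
/- Let F ⊆ K be fields, let r < k be positive integers, and let α_1, …, α_{k−2} ∈ K satisfy α_i ∉ F(α_1, …, α_{i−1}) for every i. Let A = (a_{ij}) ∈ K^{(k−r)×r} satisfy a_{11} = 1 and, for all (i,j) ≠ (1,1), a_{ij} ∈ F(α_1, …, α_{i+j−2}) \ F(α_1, …, α_{i+j−3}). Then for every pair of subsets S ⊆ {1, …, k−r} and T ⊆ {1, …, r} with |S| + |T| = r, the |S|×|S| submatrix A(S, T^c) of A consisting of the rows indexed by S and the columns indexed by T^c = {1, …, r} \ T has nonzero determinant. -/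
/-!
Put `E n = F(α_1, …, α_n)`, so the entry `a_{ij}` (indexed from `0`) is new at level `i + j`.
For strictly increasing rows `s` and columns `u`, expand the determinant of `A(s, u)` along its
last row: every entry outside the bottom-right corner has level below `N = s_last + u_last`, so
the determinant equals the corner entry times the leading minor modulo `E (N - 1)`. The corner is
not in `E (N - 1)` and the leading minor is a nonzero element of `E (N - 1)` by induction, so the
determinant is not in `E (N - 1)`; in particular it is nonzero.
-/

namespace Matrix

theorem det_mem_s3 {R σ ι : Type*} [CommRing R] [SetLike σ R] [SubringClass σ R] {S : σ}
    [Fintype ι] [DecidableEq ι] (M : Matrix ι ι R) (hM : ∀ i j, M i j ∈ S) : M.det ∈ S := by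
  rw [det_apply]
  refine sum_mem fun σ _ => ?_
  rw [Units.smul_def]
  exact zsmul_mem (prod_mem fun i _ => hM _ _) _

variable {K : Type*} [Field K]

theorem det_notMem_of_lastRow {n : ℕ} {L : Subfield K} (M : Matrix (Fin (n + 1)) (Fin (n + 1)) K)
    (hupper : ∀ i j, M (Fin.castSucc i) j ∈ L)
    (hlast : ∀ j, M (Fin.last n) (Fin.castSucc j) ∈ L)
    (hcorner : M (Fin.last n) (Fin.last n) ∉ L)
    (hminor : (M.submatrix Fin.castSucc Fin.castSucc).det ≠ 0) :
    M.det ∉ L := by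
  set C := (M.submatrix Fin.castSucc Fin.castSucc).det
  set R := ∑ j : Fin n, (-1) ^ (n + (j : ℕ)) * M (Fin.last n) (Fin.castSucc j) *
    (M.submatrix Fin.castSucc (Fin.castSucc j).succAbove).det
  have hC : C ∈ L := det_mem_s3 _ fun i j => hupper i _
  have hR : R ∈ L := sum_mem fun j _ => mul_mem (mul_mem
    (pow_mem (neg_mem (one_mem L)) _) (hlast j)) (det_mem_s3 _ fun i _ => hupper i _)
  have hexpand : M.det = R + M (Fin.last n) (Fin.last n) * C := by
    rw [det_succ_row M (Fin.last n), Fin.sum_univ_castSucc]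
    simp only [Fin.succAbove_last, Fin.val_last, Fin.val_castSucc, ← two_mul, pow_mul,
      neg_one_sq, one_pow, one_mul, R, C]
  intro hdet
  apply hcorner
  have hcorner_eq : M (Fin.last n) (Fin.last n) = (M.det - R) * C⁻¹ := by
    rw [hexpand]; field_simp; ring
  rw [hcorner_eq]
  exact mul_mem (sub_mem hdet hR) (inv_mem hC)

theorem det_submatrix_ne_zero_of_graded {p q n : ℕ} (E : ℕ → Subfield K) (hE : Monotone E)
    (A : Matrix (Fin p) (Fin q) K) (hmem : ∀ (i : Fin p) (j : Fin q), A i j ∈ E (i + j))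
    (hnew : ∀ (i : Fin p) (j : Fin q), (i : ℕ) ≠ 0 → A i j ∉ E (i + j - 1))
    (hne : ∀ (i : Fin p) (j : Fin q), A i j ≠ 0)
    (s : Fin n → Fin p) (u : Fin n → Fin q) (hs : StrictMono s) (hu : StrictMono u) :
    (A.submatrix s u).det ≠ 0 := by
  induction n with
  | zero => simp
  | succ m ih =>
    rcases m with _ | m
    · simpa [det_unique] using hne _ _
    set N := (s (Fin.last (m + 1)) : ℕ) + u (Fin.last (m + 1))
    have hmem_lt : ∀ i j, (s i : ℕ) + u j < N → A (s i) (u j) ∈ E (N - 1) :=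
      fun i j h => hE (show (s i : ℕ) + u j ≤ N - 1 by omega) (hmem _ _)
    have hs_last : ∀ i, (s (Fin.castSucc i) : ℕ) < s (Fin.last (m + 1)) :=
      fun i => hs (Fin.castSucc_lt_last i)
    have hu_last : ∀ j, (u (Fin.castSucc j) : ℕ) < u (Fin.last (m + 1)) :=
      fun j => hu (Fin.castSucc_lt_last j)
    have hu_le : ∀ j, (u j : ℕ) ≤ u (Fin.last (m + 1)) :=
      fun j => hu.monotone (Fin.le_last j)
    have hnotMem : (A.submatrix s u).det ∉ E (N - 1) := by
      refine det_notMem_of_lastRow _ (fun i j => hmem_lt _ _ ?_) (fun j => hmem_lt _ _ ?_)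
        (hnew _ _ ?_) (ih _ _ (hs.comp Fin.strictMono_castSucc) (hu.comp Fin.strictMono_castSucc))
      · have := hs_last i; have := hu_le j; omega
      · have := hu_last j; omega
      · have := hs_last 0; omega
    exact fun h => hnotMem (h ▸ zero_mem _)

end Matrix

theorem stmt_3_general {F K : Type*} [Field F] [Field K] [Algebra F K]
    (k r : ℕ)
    (α : ℕ → K)
    (A : Matrix (Fin (k - r)) (Fin r) K)
    (hA11 : ∀ (i : Fin (k - r)) (j : Fin r), ((i : ℕ), (j : ℕ)) = (0, 0) → A i j = 1)
    (hA : ∀ (i : Fin (k - r)) (j : Fin r), ((i : ℕ), (j : ℕ)) ≠ (0, 0) →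
      A i j ∈ (IntermediateField.adjoin F (α '' Set.Icc 1 ((i : ℕ) + (j : ℕ))) : Set K) \
        (IntermediateField.adjoin F (α '' Set.Icc 1 ((i : ℕ) + (j : ℕ) - 1)) : Set K))
    (S : Finset (Fin (k - r))) (T : Finset (Fin r))
    (hcc : Tᶜ.card = S.card) :
    (Matrix.of fun i j : Fin S.card =>
        A ((S.orderIsoOfFin rfl) i) ((Tᶜ.orderIsoOfFin hcc) j)).det ≠ 0 := by
  let E : ℕ → Subfield K := fun n => (IntermediateField.adjoin F (α '' Set.Icc 1 n)).toSubfield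
  have hE : Monotone E := fun a b hab =>
    IntermediateField.adjoin.mono F _ _ (Set.image_mono (Set.Icc_subset_Icc_right hab))
  have hmem : ∀ (i : Fin (k - r)) (j : Fin r), A i j ∈ E (i + j) := fun i j => by
    by_cases h : ((i : ℕ), (j : ℕ)) = (0, 0)
    · rw [hA11 i j h]; exact one_mem _
    · exact (hA i j h).1
  have hnew : ∀ (i : Fin (k - r)) (j : Fin r), (i : ℕ) ≠ 0 → A i j ∉ E (i + j - 1) :=
    fun i j hi => (hA i j fun h => hi (congrArg Prod.fst h)).2
  have hne : ∀ (i : Fin (k - r)) (j : Fin r), A i j ≠ 0 := fun i j => by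
    by_cases h : ((i : ℕ), (j : ℕ)) = (0, 0)
    · rw [hA11 i j h]; exact one_ne_zero
    · exact fun h0 => (hA i j h).2 (h0 ▸ zero_mem _)
  exact Matrix.det_submatrix_ne_zero_of_graded E hE A hmem hnew hne _ _
    ((Subtype.strictMono_coe _).comp (S.orderIsoOfFin rfl).strictMono)
    ((Subtype.strictMono_coe _).comp (Tᶜ.orderIsoOfFin hcc).strictMono)

/-- Under the hypotheses of Proposition 3 of the paper, for all subsets
`S` of rows and `T` of columns of `A ∈ K^{(k-r)×r}` with `|S| + |T| = r`, the square
submatrix `A(S, Tᶜ)` (rows indexed by `S`, columns by the complement of `T`, both taken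
in increasing order) has nonzero determinant.  The hypothesis `hcc : Tᶜ.card = S.card`
is automatic from `|S| + |T| = r`. -/
theorem stmt_3 {F K : Type*} [Field F] [Field K] [Algebra F K]
    (k r : ℕ) (hr : 0 < r) (hrk : r < k)
    (α : ℕ → K)
    (hα : ∀ i, 1 ≤ i → i ≤ k - 2 →
      α i ∉ IntermediateField.adjoin F (α '' Set.Icc 1 (i - 1)))
    (A : Matrix (Fin (k - r)) (Fin r) K)
    (hA11 : ∀ (i : Fin (k - r)) (j : Fin r), ((i : ℕ), (j : ℕ)) = (0, 0) → A i j = 1)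
    (hA : ∀ (i : Fin (k - r)) (j : Fin r), ((i : ℕ), (j : ℕ)) ≠ (0, 0) →
      A i j ∈ (IntermediateField.adjoin F (α '' Set.Icc 1 ((i : ℕ) + (j : ℕ))) : Set K) \
        (IntermediateField.adjoin F (α '' Set.Icc 1 ((i : ℕ) + (j : ℕ) - 1)) : Set K))
    (S : Finset (Fin (k - r))) (T : Finset (Fin r))
    (hST : S.card + T.card = r) (hcc : Tᶜ.card = S.card) :
    (Matrix.of fun i j : Fin S.card =>
        A ((S.orderIsoOfFin rfl) i) ((Tᶜ.orderIsoOfFin hcc) j)).det ≠ 0 :=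
  stmt_3_general k r α A hA11 hA S T hcc
end

section
/- Let F ⊆ K be fields, let n be a positive integer, and let α_1, …, α_{2n−2} ∈ K satisfy α_i ∉ F(α_1, …, α_{i−1}) for every i; set α_0 = 1. Then the n×n Hankel matrix A = (a_{ij}) over K with entries a_{ij} = α_{i+j−2} for 1 ≤ i, j ≤ n is invertible. -/
private lemma det_mem_aux {F K : Type*} [Field F] [Field K] [Algebra F K]
    (L : IntermediateField F K) {m : ℕ} (M : Matrix (Fin m) (Fin m) K)
    (h : ∀ i j, M i j ∈ L) : M.det ∈ L := by
  rw [Matrix.det_apply']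
  exact sum_mem (fun σ _ => mul_mem (intCast_mem L _) (prod_mem fun i _ => h _ _))

private lemma hankel_det_ne_zero {F K : Type*} [Field F] [Field K] [Algebra F K]
    (α : ℕ → K) (h0 : α 0 = 1) :
    ∀ n : ℕ, (∀ i, 1 ≤ i → i ≤ 2 * (n + 1) - 2 →
      α i ∉ IntermediateField.adjoin F (α '' Set.Icc 1 (i - 1))) →
    (Matrix.of fun i j : Fin (n + 1) => α ((i : ℕ) + (j : ℕ))).det ≠ 0 := by
  intro n
  induction n with
  | zero =>
    intro _
    simp [Matrix.det_fin_one, h0]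
  | succ n ih =>
    intro hα
    set L := IntermediateField.adjoin F (α '' Set.Icc 1 (2 * n + 1)) with hLdef
    have hmem : ∀ k, k ≤ 2 * n + 1 → α k ∈ L := by
      intro k hk
      rcases Nat.eq_zero_or_pos k with rfl | hpos
      · rw [h0]; exact one_mem L
      · exact IntermediateField.subset_adjoin F _ ⟨k, ⟨hpos, hk⟩, rfl⟩
    set M : Matrix (Fin (n + 2)) (Fin (n + 2)) K :=
      Matrix.of fun i j : Fin (n + 2) => α ((i : ℕ) + (j : ℕ)) with hM
    set c := (Matrix.of fun i j : Fin (n + 1) => α ((i : ℕ) + (j : ℕ))).det with hc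
    have hcne : c ≠ 0 := ih (fun i h1 h2 => hα i h1 (by omega))
    have hcL : c ∈ L :=
      det_mem_aux L _ (fun i j => hmem _ (by have := i.isLt; have := j.isLt; simp; omega))
    have hexp : M.det = ∑ i : Fin (n + 2),
        (-1 : K) ^ ((i : ℕ) + (Fin.last (n + 1) : ℕ)) * M i (Fin.last (n + 1)) *
          (M.submatrix i.succAbove (Fin.last (n + 1)).succAbove).det :=
      Matrix.det_succ_column M (Fin.last (n + 1))
    have hlastterm : (-1 : K) ^ ((Fin.last (n + 1) : ℕ) + (Fin.last (n + 1) : ℕ)) *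
        M (Fin.last (n + 1)) (Fin.last (n + 1)) *
        (M.submatrix (Fin.last (n + 1)).succAbove (Fin.last (n + 1)).succAbove).det
        = α (2 * n + 2) * c := by
      have h1 : (-1 : K) ^ ((Fin.last (n + 1) : ℕ) + (Fin.last (n + 1) : ℕ)) = 1 := by
        rw [Fin.val_last]
        exact Even.neg_one_pow ⟨n + 1, by ring⟩
      have h2 : M.submatrix (Fin.last (n + 1)).succAbove (Fin.last (n + 1)).succAbove =
          Matrix.of fun i j : Fin (n + 1) => α ((i : ℕ) + (j : ℕ)) := by
        ext i j
        simp [hM, Fin.succAbove_last]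
      rw [h1, h2, one_mul]
      simp only [hM, Matrix.of_apply, Fin.val_last]
      have h3 : (n + 1) + (n + 1) = 2 * n + 2 := by ring
      rw [h3]
    have hsplit : M.det = α (2 * n + 2) * c +
        ∑ i ∈ Finset.univ.erase (Fin.last (n + 1)),
          (-1 : K) ^ ((i : ℕ) + (Fin.last (n + 1) : ℕ)) * M i (Fin.last (n + 1)) *
            (M.submatrix i.succAbove (Fin.last (n + 1)).succAbove).det := by
      rw [hexp, ← Finset.add_sum_erase _ _ (Finset.mem_univ (Fin.last (n + 1))), hlastterm]
    have heL : (∑ i ∈ Finset.univ.erase (Fin.last (n + 1)),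
          (-1 : K) ^ ((i : ℕ) + (Fin.last (n + 1) : ℕ)) * M i (Fin.last (n + 1)) *
            (M.submatrix i.succAbove (Fin.last (n + 1)).succAbove).det) ∈ L := by
      refine sum_mem (fun i hi => ?_)
      have hine : i ≠ Fin.last (n + 1) := Finset.ne_of_mem_erase hi
      have hival : (i : ℕ) ≤ n := by
        have := i.isLt
        have : (i : ℕ) ≠ n + 1 := fun h => hine (Fin.ext (by simp [h]))
        omega
      refine mul_mem (mul_mem (pow_mem (neg_mem (one_mem L)) _) ?_) ?_
      · exact hmem _ (by simp [hM, Fin.val_last]; omega)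
      · refine det_mem_aux L _ (fun r s => ?_)
        have hr : (i.succAbove r : ℕ) ≤ n + 1 := by
          have := (i.succAbove r).isLt; omega
        have hs : ((Fin.last (n + 1)).succAbove s : ℕ) ≤ n := by
          rw [Fin.succAbove_last]
          have := s.isLt
          simp only [Fin.coe_castSucc]
          omega
        exact hmem _ (by simp [hM]; omega)
    intro hdet
    have : α (2 * n + 2) ∈ L := by
      rw [hdet] at hsplit
      have hzero : α (2 * n + 2) * c = -(∑ i ∈ Finset.univ.erase (Fin.last (n + 1)),
          (-1 : K) ^ ((i : ℕ) + (Fin.last (n + 1) : ℕ)) * M i (Fin.last (n + 1)) *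
            (M.submatrix i.succAbove (Fin.last (n + 1)).succAbove).det) := by
        linear_combination -hsplit
      have : α (2 * n + 2) = -(∑ i ∈ Finset.univ.erase (Fin.last (n + 1)),
          (-1 : K) ^ ((i : ℕ) + (Fin.last (n + 1) : ℕ)) * M i (Fin.last (n + 1)) *
            (M.submatrix i.succAbove (Fin.last (n + 1)).succAbove).det) / c := by
        rw [eq_div_iff hcne]; exact hzero
      rw [this]
      exact div_mem (neg_mem heL) hcL
    have hcontra := hα (2 * n + 2) (by omega) (by omega)
    apply hcontra
    have : (2 * n + 2 - 1) = 2 * n + 1 := by omega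
    rw [this]
    exact this ▸ ‹α (2 * n + 2) ∈ L›

/-- Let `F ⊆ K` be fields, `n ≥ 1`, and `α_0 = 1`, `α_1, …, α_{2n-2} ∈ K`
with `α_i ∉ F(α_1,…,α_{i-1})` for every `i ∈ {1,…,2n-2}`.  Then the `n × n` Hankel
matrix with entries `a_{ij} = α_{i+j-2}` (1-based; with 0-based `i j : Fin n` the entry
is `α (i.val + j.val)`) is invertible. -/
theorem stmt_4 {F K : Type*} [Field F] [Field K] [Algebra F K]
    (n : ℕ) (hn : 0 < n)
    (α : ℕ → K) (h0 : α 0 = 1)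
    (hα : ∀ i, 1 ≤ i → i ≤ 2 * n - 2 →
      α i ∉ IntermediateField.adjoin F (α '' Set.Icc 1 (i - 1))) :
    IsUnit (Matrix.of fun i j : Fin n => α ((i : ℕ) + (j : ℕ))) := by
  obtain ⟨m, rfl⟩ := Nat.exists_eq_succ_of_ne_zero hn.ne'
  rw [Matrix.isUnit_iff_isUnit_det, isUnit_iff_ne_zero]
  exact hankel_det_ne_zero α h0 m (by simpa using hα)
end

section
/- Let V be a self-orthogonal F_q-subspace of F_q^{2n}, i.e., ⟨v, Jv'⟩ = 0 for all v, v' ∈ V. Then there exists a function c : V → ℂ with c(0) = 1 such that, writing W(v) := c(v)·W̃(v), one has W(v) W(v') = W(v + v') for all v, v' ∈ V; consequently {W(v) : v ∈ V} is a commutative group of q^n × q^n matrices under matrix multiplication in which the identity matrix is the only scalar multiple of the identity. -/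
/-- `ω = exp(2πi/p)`, a primitive `p`-th root of unity. -/
noncomputable def omg (p : ℕ) : ℂ := Complex.exp (2 * (Real.pi : ℂ) * Complex.I / (p : ℂ))

/-- The `F_p`-valued pairing `⟨x, y⟩ = tr(∑ s, x s * y s)` on `F_q^n`, where
`tr : F_q → F_p` is the field trace. -/
noncomputable def ip (p : ℕ) {K : Type*} [Field K] [Fintype K] [Algebra (ZMod p) K]
    {n : ℕ} (x y : Fin n → K) : ZMod p :=
  Algebra.trace (ZMod p) K (∑ s, x s * y s)

/-- The Weyl operator `W̃(a,b)`: the `q^n × q^n` complex matrix, with rows and columns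
indexed by `F_q^n`, whose `(j,k)` entry is `ω^{⟨b,k⟩}` if `j = k + a` and `0`
otherwise. -/
noncomputable def Wt (p : ℕ) {K : Type*} [Field K] [Fintype K] [DecidableEq K]
    [Algebra (ZMod p) K] {n : ℕ} (a b : Fin n → K) :
    Matrix (Fin n → K) (Fin n → K) ℂ :=
  Matrix.of fun j k => if j = k + a then omg p ^ (ip p b k).val else 0

/-- The Weyl operator `W̃(v)` of a vector `v = (a,b) ∈ F_q^{2n} = F_q^n × F_q^n`. -/
noncomputable def Wtv (p : ℕ) {K : Type*} [Field K] [Fintype K] [DecidableEq K]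
    [Algebra (ZMod p) K] {n : ℕ} (v : (Fin n → K) × (Fin n → K)) :
    Matrix (Fin n → K) (Fin n → K) ℂ :=
  Wt p v.1 v.2

/-- The symplectic pairing `⟨v, Jw⟩ = ⟨v.2, w.1⟩ − ⟨v.1, w.2⟩ ∈ F_p` on
`F_q^{2n} = F_q^n × F_q^n`, where `J = [[0, −I_n],[I_n, 0]]`. -/
noncomputable def symp (p : ℕ) {K : Type*} [Field K] [Fintype K] [Algebra (ZMod p) K]
    {n : ℕ} (v w : (Fin n → K) × (Fin n → K)) : ZMod p :=
  ip p v.2 w.1 - ip p v.1 w.2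

/-!
On `V` the Weyl operators multiply as `W̃(v) W̃(w) = ω^{β(v,w)} W̃(v + w)` with
`β(v,w) = ⟨v₂, w₁⟩`, and self-orthogonality of `V` says exactly that `β` is symmetric on `V`.
A symmetric biadditive form `B` with values in a divisible group `A` always has a quadratic
refinement `f (x + y) = f x + f y + B x y`: the twisted product
`(a, x) + (b, y) = (a + b + B x y, x + y)` on `A × M` is an abelian group (by symmetry), the
inclusion of `A` splits because divisible groups are injective `ℤ`-modules, and `-f` is the
retraction restricted to `0 × M`. Taking `A = ℝ/ℤ` and `c = exp (2πi f)` cancels the phases.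
The only scalar Weyl operator is `W̃(0) = 1`: look at the entry `(a, 0)`, then at the diagonal,
where nondegeneracy of the trace form forces `b = 0`.
-/

section QuadraticRefinement

variable {A M : Type*} [AddCommGroup A] [AddCommGroup M]

@[ext]
structure CocycleExt (B : M →+ M →+ A) where
  fst : A
  snd : M

namespace CocycleExt

variable {B : M →+ M →+ A}

instance : Zero (CocycleExt B) := ⟨⟨0, 0⟩⟩

instance : Add (CocycleExt B) := ⟨fun u v => ⟨u.fst + v.fst + B u.snd v.snd, u.snd + v.snd⟩⟩

instance : Neg (CocycleExt B) := ⟨fun u => ⟨-u.fst + B u.snd u.snd, -u.snd⟩⟩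

@[simp] lemma fst_zero : (0 : CocycleExt B).fst = 0 := rfl
@[simp] lemma snd_zero : (0 : CocycleExt B).snd = 0 := rfl
@[simp] lemma fst_add (u v : CocycleExt B) : (u + v).fst = u.fst + v.fst + B u.snd v.snd := rfl
@[simp] lemma snd_add (u v : CocycleExt B) : (u + v).snd = u.snd + v.snd := rfl
@[simp] lemma fst_neg (u : CocycleExt B) : (-u).fst = -u.fst + B u.snd u.snd := rfl
@[simp] lemma snd_neg (u : CocycleExt B) : (-u).snd = -u.snd := rfl

instance : AddGroup (CocycleExt B) where
  add_assoc u v w := by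
    ext <;> simp only [fst_add, snd_add, map_add, AddMonoidHom.add_apply] <;> abel
  zero_add u := by ext <;> simp
  add_zero u := by ext <;> simp
  neg_add_cancel u := by ext <;> simp
  nsmul := nsmulRec
  zsmul := zsmulRec

abbrev addCommGroup (hB : ∀ x y, B x y = B y x) : AddCommGroup (CocycleExt B) :=
  { (inferInstance : AddGroup (CocycleExt B)) with
    add_comm u v := by ext <;> simp only [fst_add, snd_add, hB u.snd] <;> abel }

def inl : A →+ CocycleExt B where
  toFun a := ⟨a, 0⟩
  map_zero' := rfl
  map_add' _ _ := by ext <;> simp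

lemma inl_injective : Function.Injective (inl : A →+ CocycleExt B) :=
  fun _ _ h => congrArg fst h

end CocycleExt

lemma exists_quadratic_refinement [DivisibleBy A ℤ] (B : M →+ M →+ A)
    (hB : ∀ x y, B x y = B y x) :
    ∃ f : M → A, f 0 = 0 ∧ ∀ x y, f (x + y) = f x + f y + B x y := by
  let _ := CocycleExt.addCommGroup hB
  obtain ⟨r, hr⟩ := (Module.Baer.of_divisible A).extension_property_addMonoidHom
    (CocycleExt.inl (B := B)) CocycleExt.inl_injective (AddMonoidHom.id A)
  have hr_inl (a : A) : r ⟨a, 0⟩ = a := DFunLike.congr_fun hr a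
  refine ⟨fun x => -r ⟨0, x⟩, by simpa using hr_inl 0, fun x y => ?_⟩
  have hsplit := congrArg r
    (show (⟨0, x⟩ + ⟨0, y⟩ : CocycleExt B) = ⟨B x y, 0⟩ + ⟨0, x + y⟩ by ext <;> simp)
  rw [map_add, map_add, hr_inl] at hsplit
  show -r _ = -r _ + -r _ + B x y
  rw [eq_sub_of_add_eq' hsplit.symm]
  abel

end QuadraticRefinement

open ZMod in
lemma omg_pow_val (p : ℕ) [NeZero p] (t : ZMod p) : omg p ^ t.val = stdAddChar t := by
  rw [← natCast_zmod_val t, val_natCast_of_lt (val_lt t), ← Int.cast_natCast, stdAddChar_coe,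
    omg, ← Complex.exp_nat_mul]
  push_cast
  ring_nf

section Weyl

variable {p : ℕ} {K : Type*} [Field K] [Fintype K] [Algebra (ZMod p) K] {n : ℕ}

lemma ip_add_left (x y z : Fin n → K) : ip p (x + y) z = ip p x z + ip p y z := by
  simp [ip, add_mul, Finset.sum_add_distrib]

lemma ip_add_right (x y z : Fin n → K) : ip p x (y + z) = ip p x y + ip p x z := by
  simp [ip, mul_add, Finset.sum_add_distrib]

lemma ip_comm (x y : Fin n → K) : ip p x y = ip p y x := by
  simp [ip, mul_comm]

@[simp] lemma ip_zero_right (x : Fin n → K) : ip p x 0 = 0 := by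
  simp [ip]

lemma eq_zero_of_forall_ip_eq_zero [Fact p.Prime] {b : Fin n → K} (h : ∀ k, ip p b k = 0) :
    b = 0 := by
  ext s
  refine (traceForm_nondegenerate (ZMod p) K).1 _ fun y => ?_
  simpa [ip, Pi.single_apply] using h (Pi.single s y)

variable (p) in
noncomputable def weylCocycle :
    (Fin n → K) × (Fin n → K) →+ (Fin n → K) × (Fin n → K) →+ ZMod p :=
  AddMonoidHom.mk' (fun v => AddMonoidHom.mk' (fun w => ip p v.2 w.1) fun _ _ => ip_add_right ..)
    fun _ _ => by ext; simp [ip_add_left]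

lemma weylCocycle_comm {v w : (Fin n → K) × (Fin n → K)} (h : symp p v w = 0) :
    weylCocycle p v w = weylCocycle p w v := by
  simpa [weylCocycle, symp, sub_eq_zero, ip_comm v.1] using h

lemma exists_weylCocycle_eq_coboundary [NeZero p] (V : AddSubgroup ((Fin n → K) × (Fin n → K)))
    (hV : ∀ v ∈ V, ∀ w ∈ V, symp p v w = 0) :
    ∃ c : (Fin n → K) × (Fin n → K) → ℂ, c 0 = 1 ∧ (∀ v, c v ≠ 0) ∧
      ∀ v ∈ V, ∀ w ∈ V, c v * c w * ZMod.stdAddChar (weylCocycle p v w) = c (v + w) := by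
  classical
  let B : V →+ V →+ UnitAddCircle :=
    (((weylCocycle p).compl₂ V.subtype).comp V.subtype).compr₂ ZMod.toAddCircle
  obtain ⟨f, hf0, hf⟩ := exists_quadratic_refinement B fun v w => by
    simp [B, weylCocycle_comm (hV v v.2 w w.2)]
  refine ⟨fun v => if hv : v ∈ V then (f ⟨v, hv⟩).toCircle else 1, ?_, ?_, ?_⟩
  · simp only [dif_pos V.zero_mem]
    rw [show (⟨0, V.zero_mem⟩ : V) = 0 from rfl, hf0, AddCircle.toCircle_zero, Circle.coe_one]
  · intro v
    dsimp only
    split_ifs <;> simp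
  · intro v hv w hw
    simp only [dif_pos hv, dif_pos hw, dif_pos (add_mem hv hw)]
    rw [show (⟨v + w, add_mem hv hw⟩ : V) = ⟨v, hv⟩ + ⟨w, hw⟩ from rfl, hf,
      AddCircle.toCircle_add, AddCircle.toCircle_add]
    push_cast
    rfl

variable [DecidableEq K]

lemma Wt_apply [NeZero p] (a b j k : Fin n → K) :
    Wt p a b j k = if j = k + a then ZMod.stdAddChar (ip p b k) else 0 := by
  simp [Wt, omg_pow_val]

lemma Wt_mul [NeZero p] (a b a' b' : Fin n → K) :
    Wt p a b * Wt p a' b' = ZMod.stdAddChar (ip p b a') • Wt p (a + a') (b + b') := by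
  ext j k
  rw [Matrix.mul_apply, Finset.sum_eq_single (k + a') (fun m _ hm => by simp [Wt_apply, hm])
    (by simp)]
  simp only [Wt_apply, Matrix.smul_apply, smul_eq_mul, add_assoc, add_comm a' a, ip_add_left,
    ip_add_right, AddChar.map_add_eq_mul]
  split_ifs <;> ring

lemma Wtv_mul [NeZero p] (v w : (Fin n → K) × (Fin n → K)) :
    Wtv p v * Wtv p w = ZMod.stdAddChar (weylCocycle p v w) • Wtv p (v + w) :=
  Wt_mul v.1 v.2 w.1 w.2

lemma Wt_zero_zero : Wt p (0 : Fin n → K) 0 = 1 := by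
  ext j k
  simp [Wt, Matrix.one_apply, ip]

lemma Wt_eq_smul_one [Fact p.Prime] {a b : Fin n → K} {z : ℂ} (h : Wt p a b = z • 1) :
    a = 0 ∧ b = 0 := by
  have hentry (j k : Fin n → K) := congrFun (congrFun h j) k
  have ha : a = 0 := by
    by_contra ha
    simpa [Wt_apply, ha] using hentry a 0
  subst ha
  have hz : z = 1 := by simpa [Wt_apply] using (hentry 0 0).symm
  refine ⟨rfl, eq_zero_of_forall_ip_eq_zero fun k => ZMod.injective_stdAddChar (N := p) ?_⟩
  simpa [Wt_apply, hz] using hentry k k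

end Weyl

/-- Proposition 1 of the paper: if `V ⊆ F_q^{2n}` is a self-orthogonal
subspace (`⟨v, Jv'⟩ = 0` for all `v, v' ∈ V`), then there is a function `c : V → ℂ`
with `c 0 = 1` such that `W(v) := c(v) • W̃(v)` satisfies `W(v) W(v') = W(v+v')` on
`V`; consequently `{W(v) : v ∈ V}` is a commutative group of matrices in which the
identity matrix is the only scalar multiple of the identity. -/
theorem stmt_11 (p : ℕ) [Fact p.Prime] (K : Type*) [Field K] [Fintype K] [DecidableEq K]
    [Algebra (ZMod p) K] (n : ℕ)
    (V : Submodule K ((Fin n → K) × (Fin n → K)))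
    (hV : ∀ v ∈ V, ∀ v' ∈ V, symp p v v' = 0) :
    ∃ c : ((Fin n → K) × (Fin n → K)) → ℂ,
      c 0 = 1 ∧
      (∀ v ∈ V, ∀ v' ∈ V,
        (c v • Wtv p v) * (c v' • Wtv p v') = c (v + v') • Wtv p (v + v')) ∧
      (∀ v ∈ V, ∀ v' ∈ V,
        (c v • Wtv p v) * (c v' • Wtv p v') = (c v' • Wtv p v') * (c v • Wtv p v)) ∧
      (∀ v ∈ V, ∀ z : ℂ,
        c v • Wtv p v = z • (1 : Matrix (Fin n → K) (Fin n → K) ℂ) →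
          c v • Wtv p v = 1) := by
  obtain ⟨c, hc0, hc_ne, hc_mul⟩ := exists_weylCocycle_eq_coboundary V.toAddSubgroup hV
  have hW : ∀ v ∈ V, ∀ w ∈ V,
      (c v • Wtv p v) * (c w • Wtv p w) = c (v + w) • Wtv p (v + w) := by
    intro v hv w hw
    rw [Matrix.smul_mul, Matrix.mul_smul, Wtv_mul, smul_smul, smul_smul, ← hc_mul v hv w hw]
  refine ⟨c, hc0, hW, fun v hv w hw => by rw [hW v hv w hw, hW w hw v hv, add_comm], ?_⟩
  intro v _ z hz
  have hscalar : Wt p v.1 v.2 = ((c v)⁻¹ * z) • 1 := by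
    rw [mul_smul, ← hz, smul_smul, inv_mul_cancel₀ (hc_ne v), one_smul]
    rfl
  obtain ⟨ha, hb⟩ := Wt_eq_smul_one hscalar
  rw [show v = 0 from Prod.ext ha hb, hc0, one_smul]
  exact Wt_zero_zero
end
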